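/- Let p ≥ 5 be a prime, let k ≥ 2 and r ≥ 0 be integers, and let a, b, c, d ∈ ℤ be such that the binary cubic form f(x, y) = ax³ + bx²y + cxy² + dy³ is nondegenerate modulo p and p^r divides d; set d' = d/p^r. Then ∑ e^{2πi(aδ − bγ + cβ − d'α)/p^k} = 0, where the sum is over all (α, β, γ, δ) ∈ (ℤ/p^kℤ)⁴ satisfying αγ ≡ p^r β² (mod p^k), αδ ≡ p^r βγ (mod p^k), and γ² ≡ βδ (mod p^k). -/

import Mathlib

set_option autoImplicit false

/-!
Vanishing of the exponential sum
`∑ e^{2πi(aδ − bγ + cβ − d'α)/p^k}` over `(α,β,γ,δ) ∈ (ℤ/p^kℤ)⁴` with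
`αγ ≡ p^rβ²`, `αδ ≡ p^rβγ`, `γ² ≡ βδ (mod p^k)`, for `p ≥ 5` prime, `k ≥ 2`,
`f(x,y) = ax³ + bx²y + cxy² + dy³` nondegenerate modulo `p`, `p^r ∣ d`, `d' = d/p^r`.
-/

/-- The binary cubic form with integer coefficients `(a, b, c, d)` is nondegenerate
modulo `p`: its reduction modulo `p` is nonzero and has no repeated linear factor over
an algebraic closure of `𝔽_p` (i.e. it is not of the form `(αx + βy)²(γx + δy)`). -/
def NondegModP (p : ℕ) [Fact p.Prime] (a b c d : ℤ) : Prop :=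
  ¬((a : ZMod p) = 0 ∧ (b : ZMod p) = 0 ∧ (c : ZMod p) = 0 ∧ (d : ZMod p) = 0) ∧
    ¬∃ α β γ δ : AlgebraicClosure (ZMod p),
        (a : AlgebraicClosure (ZMod p)) = α ^ 2 * γ ∧
        (b : AlgebraicClosure (ZMod p)) = α ^ 2 * δ + 2 * α * β * γ ∧
        (c : AlgebraicClosure (ZMod p)) = 2 * α * β * δ + β ^ 2 * γ ∧
        (d : AlgebraicClosure (ZMod p)) = β ^ 2 * δ


/-! Averaging over the translations `x ↦ x + p^(k-1) w` reduces the sum to the fibre sums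
`∑_w G(x + p^(k-1) w)` of its summand `G`. Since `(p^(k-1))² = 0`, the cone equations change along
such a fibre only by `p^(k-1)` times their differential at `x`. If `u` is tangent at the reduction
of `x` modulo `p` (a point of the cone over `𝔽_p`), translating `w` by `u` therefore preserves the
cone condition and multiplies the character by `e(p^(k-1) L(u))`, where `L` is the linear form in
the exponent. Nondegeneracy of the cubic form modulo `p` is what provides, at every point of the
cone over `𝔽_p`, a tangent vector with `L(u) ≢ 0 (mod p)`; then this factor is a nontrivial root
of unity, and every fibre sum vanishes. -/

open Finset

namespace Fintype

variable {G M : Type*} [AddGroup G] [Fintype G]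

theorem sum_eq_zero_of_map_add_eq_mul [Ring M] [NoZeroDivisors M] (f : G → M) (c : G) {ε : M}
    (hε : ε ≠ 1) (hf : ∀ x, f (x + c) = ε * f x) : ∑ x, f x = 0 := by
  have hfix : ∑ x, f x = ε * ∑ x, f x := by
    rw [mul_sum, ← Equiv.sum_comp (Equiv.addRight c)]
    exact Finset.sum_congr rfl fun x _ => hf x
  have : (ε - 1) * ∑ x, f x = 0 := by rw [sub_mul, ← hfix, one_mul, sub_self]
  exact (mul_eq_zero.mp this).resolve_left (sub_ne_zero.mpr hε)

theorem sum_eq_zero_of_sum_add_eq_zero {ι : Type*} [Fintype ι] [Nonempty ι] [AddCommMonoid M]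
    [IsAddTorsionFree M] (f : G → M) (g : ι → G) (h : ∀ x, ∑ i, f (x + g i) = 0) :
    ∑ x, f x = 0 := by
  have : card ι • ∑ x, f x = 0 :=
    calc card ι • ∑ x, f x = ∑ i : ι, ∑ x, f (x + g i) := by
          rw [← Finset.card_univ, ← sum_const]
          exact Finset.sum_congr rfl fun i _ => (Equiv.sum_comp (Equiv.addRight (g i)) f).symm
      _ = 0 := by rw [Finset.sum_comm]; exact Finset.sum_eq_zero fun x _ => h x
  exact (nsmul_eq_zero_iff_right card_ne_zero).mp this

end Fintype

section Cone

variable {R S : Type*} [CommRing R] [CommRing S]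

def coneForm (ρ : R) : R × R × R × R → R × R × R
  | (α, β, γ, δ) => (α * γ - ρ * β ^ 2, α * δ - ρ * β * γ, γ ^ 2 - β * δ)

def conePolar (ρ : R) : R × R × R × R → R × R × R × R → R × R × R
  | (α, β, γ, δ), (u₁, u₂, u₃, u₄) =>
    (γ * u₁ - 2 * ρ * β * u₂ + α * u₃, δ * u₁ - ρ * γ * u₂ - ρ * β * u₃ + α * u₄,
      2 * γ * u₃ - δ * u₂ - β * u₄)

def cubicPairing (a b c d : R) : R × R × R × R → R
  | (α, β, γ, δ) => a * δ - b * γ + c * β - d * α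

theorem coneForm_eq_zero_iff (ρ α β γ δ : R) :
    coneForm ρ (α, β, γ, δ) = 0 ↔
      α * γ = ρ * β ^ 2 ∧ α * δ = ρ * β * γ ∧ γ ^ 2 = β * δ := by
  simp only [coneForm, Prod.mk_eq_zero, sub_eq_zero]

theorem coneForm_add_smul {h : R} (hh : h * h = 0) (ρ : R) (x u : R × R × R × R) :
    coneForm ρ (x + h • u) = coneForm ρ x + h • conePolar ρ x u := by
  obtain ⟨α, β, γ, δ⟩ := x
  obtain ⟨u₁, u₂, u₃, u₄⟩ := u
  simp only [Prod.mk_add_mk, Prod.smul_mk, smul_eq_mul, coneForm, conePolar, Prod.mk.injEq]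
  refine ⟨?_, ?_, ?_⟩
  · linear_combination (u₁ * u₃ - ρ * u₂ ^ 2) * hh
  · linear_combination (u₁ * u₄ - ρ * u₂ * u₃) * hh
  · linear_combination (u₃ ^ 2 - u₂ * u₄) * hh

theorem conePolar_add (ρ : R) (x u v : R × R × R × R) :
    conePolar ρ x (u + v) = conePolar ρ x u + conePolar ρ x v := by
  obtain ⟨α, β, γ, δ⟩ := x
  obtain ⟨u₁, u₂, u₃, u₄⟩ := u
  obtain ⟨v₁, v₂, v₃, v₄⟩ := v
  simp only [Prod.mk_add_mk, conePolar, Prod.mk.injEq]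
  refine ⟨?_, ?_, ?_⟩ <;> ring

theorem coneForm_add_smul_add {h : R} (hh : h * h = 0) (ρ : R) (x w u : R × R × R × R) :
    coneForm ρ (x + h • (w + u)) = coneForm ρ (x + h • w) + h • conePolar ρ x u := by
  rw [coneForm_add_smul hh, coneForm_add_smul hh, conePolar_add, smul_add, add_assoc]

theorem cubicPairing_add_smul (a b c d h : R) (x u : R × R × R × R) :
    cubicPairing a b c d (x + h • u) = cubicPairing a b c d x + h * cubicPairing a b c d u := by
  obtain ⟨α, β, γ, δ⟩ := x
  obtain ⟨u₁, u₂, u₃, u₄⟩ := u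
  simp only [Prod.smul_mk, smul_eq_mul, cubicPairing]
  ring

variable (f : R →+* S)

theorem coneForm_map (ρ : R) (x : R × R × R × R) :
    coneForm (f ρ) (Prod.map f (Prod.map f (Prod.map f f)) x) =
      Prod.map f (Prod.map f f) (coneForm ρ x) := by
  obtain ⟨α, β, γ, δ⟩ := x
  simp [coneForm]

theorem conePolar_map (ρ : R) (x u : R × R × R × R) :
    conePolar (f ρ) (Prod.map f (Prod.map f (Prod.map f f)) x)
        (Prod.map f (Prod.map f (Prod.map f f)) u) =
      Prod.map f (Prod.map f f) (conePolar ρ x u) := by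
  obtain ⟨α, β, γ, δ⟩ := x
  obtain ⟨u₁, u₂, u₃, u₄⟩ := u
  simp [conePolar, map_ofNat]

theorem cubicPairing_map (a b c d : R) (x : R × R × R × R) :
    cubicPairing (f a) (f b) (f c) (f d) (Prod.map f (Prod.map f (Prod.map f f)) x) =
      f (cubicPairing a b c d x) := by
  obtain ⟨α, β, γ, δ⟩ := x
  simp [cubicPairing]

end Cone

section Character

variable {R M : Type*} [CommRing R] [DecidableEq R] [CommRing M]

noncomputable def coneTerm (ψ : AddChar R M) (ρ a b c d : R) (x : R × R × R × R) : M :=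
  if coneForm ρ x = 0 then ψ (cubicPairing a b c d x) else 0

variable {ψ : AddChar R M} {ρ a b c d h : R} {x u : R × R × R × R}

theorem coneTerm_add_smul_add (hh : h * h = 0) (hu : h • conePolar ρ x u = 0)
    (w : R × R × R × R) :
    coneTerm ψ ρ a b c d (x + h • (w + u)) =
      ψ (h * cubicPairing a b c d u) * coneTerm ψ ρ a b c d (x + h • w) := by
  simp only [coneTerm, coneForm_add_smul_add hh, hu, add_zero]
  split_ifs
  · rw [smul_add, ← add_assoc, cubicPairing_add_smul, AddChar.map_add_eq_mul, mul_comm]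
  · rw [mul_zero]

theorem sum_coneTerm_add_smul_eq_zero [Fintype R] [NoZeroDivisors M] (hh : h * h = 0)
    (hu : h • conePolar ρ x u = 0) (hψ : ψ (h * cubicPairing a b c d u) ≠ 1) :
    ∑ w, coneTerm ψ ρ a b c d (x + h • w) = 0 :=
  Fintype.sum_eq_zero_of_map_add_eq_mul _ u hψ (coneTerm_add_smul_add hh hu)

end Character

section Transversality

variable {K : Type*}

/-- `a x³ + b x²y + c xy² + d y³ = (s x + t y)² (u x + v y)`; the zero form is included
(`s = t = 0`). -/
def HasSquaredLinearFactor [CommRing K] (a b c d : K) : Prop :=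
  ∃ s t u v : K, a = s ^ 2 * u ∧ b = s ^ 2 * v + 2 * s * t * u ∧ c = 2 * s * t * v + t ^ 2 * u ∧
    d = t ^ 2 * v

def IsTransverseToCone [CommRing K] (ρ a b c d : K) : Prop :=
  ∀ x, coneForm ρ x = 0 → ∃ u, conePolar ρ x u = 0 ∧ cubicPairing a b c d u ≠ 0

variable [Field K]

theorem isTransverseToCone_one {a b c d : K} (h : ¬HasSquaredLinearFactor a b c d) :
    IsTransverseToCone 1 a b c d := by
  rintro ⟨α, β, γ, δ⟩ hx
  obtain ⟨h₁, h₂, h₃⟩ := (coneForm_eq_zero_iff _ _ _ _ _).mp hx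
  rw [one_mul] at h₁
  by_cases hα : α = 0
  · obtain rfl : β = 0 := pow_eq_zero_iff two_ne_zero |>.mp (by rw [← h₁, hα, zero_mul])
    obtain rfl : γ = 0 := pow_eq_zero_iff two_ne_zero |>.mp (by rw [h₃, zero_mul])
    subst hα
    by_cases ha : a = 0
    · by_cases hb : b = 0
      · exact absurd ⟨0, 1, c, d, by simp [ha], by simp [hb], by ring, by ring⟩ h
      · exact ⟨(0, 0, 1, 0), by simp [conePolar], by simpa [cubicPairing]⟩
    · exact ⟨(0, 0, 0, 1), by simp [conePolar], by simpa [cubicPairing]⟩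
  · obtain ⟨t, rfl⟩ : ∃ t, β = t * α := ⟨β / α, by field_simp⟩
    obtain rfl : γ = t ^ 2 * α := mul_left_cancel₀ hα (by rw [h₁]; ring)
    obtain rfl : δ = t ^ 3 * α := mul_left_cancel₀ hα (by rw [h₂]; ring)
    by_cases h₀ : cubicPairing a b c d (1, t, t ^ 2, t ^ 3) = 0
    · by_cases h₀' : cubicPairing a b c d (0, 1, 2 * t, 3 * t ^ 2) = 0
      · simp only [cubicPairing] at h₀ h₀'
        -- `t` is a double root: the form is `(x + t y)² (a x + (b - 2 a t) y)`
        exact absurd ⟨1, t, a, b - 2 * a * t, by ring, by ring, by linear_combination h₀',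
          by linear_combination t * h₀' - h₀⟩ h
      · exact ⟨_, by simp only [conePolar, Prod.mk_eq_zero]; refine ⟨?_, ?_, ?_⟩ <;> ring, h₀'⟩
    · exact ⟨_, by simp only [conePolar, Prod.mk_eq_zero]; refine ⟨?_, ?_, ?_⟩ <;> ring, h₀⟩

theorem isTransverseToCone_zero {a b c d : K} (h2 : (2 : K) ≠ 0)
    (h : ¬HasSquaredLinearFactor a b c 0) : IsTransverseToCone 0 a b c d := by
  have hc : c ≠ 0 := fun hc => h ⟨1, 0, a, b, by ring, by ring, by simp [hc], by ring⟩
  -- if `b² = 4ac`, then `x (a x² + b xy + c y²) = (b / (2c) x + y)² (c x)`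
  have hdisc : b ^ 2 ≠ 4 * a * c := fun hdisc =>
    h ⟨b / (2 * c), 1, c, 0, by field_simp; linear_combination -hdisc, by field_simp; ring, by ring,
      by ring⟩
  rintro ⟨α, β, γ, δ⟩ hx
  obtain ⟨h₁, h₂, h₃⟩ := (coneForm_eq_zero_iff _ _ _ _ _).mp hx
  by_cases hδ : δ = 0
  · exact ⟨(0, 1, 0, 0), by simp [conePolar, hδ], by simpa [cubicPairing]⟩
  obtain rfl : α = 0 := (mul_eq_zero.mp (by simpa using h₂)).resolve_right hδ
  by_cases hγ : cubicPairing a b c d (0, 2 * γ, δ, 0) = 0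
  · by_cases hβ : cubicPairing a b c d (0, -β, 0, δ) = 0
    · simp only [cubicPairing] at hγ hβ
      refine absurd (mul_right_cancel₀ (pow_ne_zero 2 hδ) ?_) hdisc
      linear_combination -(b * δ + 2 * c * γ) * hγ + 4 * c ^ 2 * h₃ - 4 * c * δ * hβ
    · exact ⟨_, by simp only [conePolar, Prod.mk_eq_zero]; refine ⟨?_, ?_, ?_⟩ <;> ring, hβ⟩
  · exact ⟨_, by simp only [conePolar, Prod.mk_eq_zero]; refine ⟨?_, ?_, ?_⟩ <;> ring, hγ⟩

end Transversality

section PrimePower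

variable {p k : ℕ}

theorem ZMod.natCast_pow_pred_mul_self_eq_zero (hk : 2 ≤ k) :
    (p : ZMod (p ^ k)) ^ (k - 1) * (p : ZMod (p ^ k)) ^ (k - 1) = 0 := by
  rw [← pow_add]
  exact pow_eq_zero_of_le (m := k) (by omega) (by exact_mod_cast ZMod.natCast_self (p ^ k))

theorem ZMod.natCast_pow_pred_mul_eq_zero_iff (hp : p ≠ 0) (hk : k ≠ 0)
    (π : ZMod (p ^ k) →+* ZMod p) (x : ZMod (p ^ k)) :
    (p : ZMod (p ^ k)) ^ (k - 1) * x = 0 ↔ π x = 0 := by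
  obtain ⟨z, rfl⟩ := ZMod.intCast_surjective x
  have hpk : (p : ℤ) ^ k = (p : ℤ) ^ (k - 1) * p := by
    rw [← pow_succ, Nat.sub_add_cancel (by omega)]
  rw [map_intCast, ZMod.intCast_zmod_eq_zero_iff_dvd, ← Int.cast_natCast, ← Int.cast_pow,
    ← Int.cast_mul, ZMod.intCast_zmod_eq_zero_iff_dvd, Nat.cast_pow, hpk,
    mul_dvd_mul_iff_left (pow_ne_zero _ (by exact_mod_cast hp))]

end PrimePower

theorem ZMod.stdAddChar_apply_eq_exp {N : ℕ} [NeZero N] (x : ZMod N) :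
    (ZMod.stdAddChar x : ℂ) = Complex.exp (2 * Real.pi * Complex.I * (x.val / N)) := by
  rw [ZMod.stdAddChar_apply, ZMod.toCircle_apply, mul_div_assoc]

theorem sum_coneTerm_add_pow_smul_eq_zero {p k : ℕ} [NeZero (p ^ k)] (hk : 2 ≤ k)
    {ρ a b c d : ZMod (p ^ k)} (π : ZMod (p ^ k) →+* ZMod p)
    (hT : IsTransverseToCone (π ρ) (π a) (π b) (π c) (π d))
    (x : ZMod (p ^ k) × ZMod (p ^ k) × ZMod (p ^ k) × ZMod (p ^ k)) :
    ∑ w, coneTerm ZMod.stdAddChar ρ a b c d (x + (p : ZMod (p ^ k)) ^ (k - 1) • w) = 0 := by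
  have hp : p ≠ 0 := by
    rintro rfl
    exact NeZero.ne (0 ^ k) (zero_pow (by omega))
  have hq := ZMod.natCast_pow_pred_mul_eq_zero_iff hp (by omega) π
  by_cases hx : ∃ w₀, coneForm ρ (x + (p : ZMod (p ^ k)) ^ (k - 1) • w₀) = 0
  swap
  · exact Finset.sum_eq_zero fun w _ => if_neg (not_exists.mp hx w)
  obtain ⟨w₀, hw₀⟩ := hx
  -- recentre the fibre at the point `x + p^(k-1) w₀` of the cone
  rw [← Equiv.sum_comp (Equiv.addLeft w₀)]
  simp only [Equiv.coe_addLeft, smul_add, ← add_assoc]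
  obtain ⟨u, hu, hℓ⟩ := hT _ (by
    rw [coneForm_map, hw₀]; exact Prod.ext (map_zero π) (Prod.ext (map_zero π) (map_zero π)))
  obtain ⟨U, rfl⟩ := Prod.map_surjective.mpr ⟨ZMod.ringHom_surjective π,
    Prod.map_surjective.mpr ⟨ZMod.ringHom_surjective π,
      Prod.map_surjective.mpr ⟨ZMod.ringHom_surjective π, ZMod.ringHom_surjective π⟩⟩⟩ u
  refine sum_coneTerm_add_smul_eq_zero (u := U) (ZMod.natCast_pow_pred_mul_self_eq_zero hk) ?_ ?_
  · rw [conePolar_map] at hu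
    generalize conePolar ρ _ U = y at hu ⊢
    obtain ⟨y₁, y₂, y₃⟩ := y
    simpa only [Prod.map, Prod.mk_eq_zero, Prod.smul_mk, smul_eq_mul, hq] using hu
  · rwa [Ne, ← AddChar.map_zero_eq_one (ZMod.stdAddChar (N := p ^ k)),
      ZMod.injective_stdAddChar.eq_iff, hq, ← cubicPairing_map]

theorem not_hasSquaredLinearFactor_of_nondegModP {p : ℕ} [Fact p.Prime] {a b c d : ℤ}
    (hnd : NondegModP p a b c d) : ¬HasSquaredLinearFactor (a : ZMod p) b c d := by
  rintro ⟨s, t, u, v, h₁, h₂, h₃, h₄⟩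
  set f := algebraMap (ZMod p) (AlgebraicClosure (ZMod p))
  refine hnd.2 ⟨f s, f t, f u, f v, ?_, ?_, ?_, ?_⟩
  · simpa only [map_intCast, map_mul, map_pow] using congrArg f h₁
  · simpa only [map_intCast, map_mul, map_pow, map_add, map_ofNat] using congrArg f h₂
  · simpa only [map_intCast, map_mul, map_pow, map_add, map_ofNat] using congrArg f h₃
  · simpa only [map_intCast, map_mul, map_pow] using congrArg f h₄

theorem isTransverseToCone_of_nondegModP {p r : ℕ} [Fact p.Prime] (hp : p ≠ 2) {a b c d d' : ℤ}
    (hnd : NondegModP p a b c d) (hd : d = (p : ℤ) ^ r * d') :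
    IsTransverseToCone ((p : ZMod p) ^ r) (a : ZMod p) b c d' := by
  have hsq := not_hasSquaredLinearFactor_of_nondegModP hnd
  rcases Nat.eq_zero_or_pos r with rfl | hr
  · rw [pow_zero, one_mul] at hd
    subst hd
    simpa using isTransverseToCone_one hsq
  · rw [ZMod.natCast_self, zero_pow hr.ne']
    refine isTransverseToCone_zero (Ring.two_ne_zero (by rwa [ZMod.ringChar_zmod_n])) ?_
    simpa [hd, hr.ne'] using hsq

/-- Let `p ≥ 5` be prime, `k ≥ 2`, `r ≥ 0`, and `a, b, c, d ∈ ℤ` with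
`ax³ + bx²y + cxy² + dy³` nondegenerate modulo `p`, `p^r ∣ d` and `d' = d/p^r`.  Then
`∑ e^{2πi(aδ − bγ + cβ − d'α)/p^k} = 0`, the sum over `(α, β, γ, δ) ∈ (ℤ/p^kℤ)⁴` with
`αγ ≡ p^rβ²`, `αδ ≡ p^rβγ` and `γ² ≡ βδ (mod p^k)`. -/
theorem exponential_sum_vanishes (p : ℕ) [Fact p.Prime] (hp5 : 5 ≤ p)
    (k r : ℕ) [NeZero (p ^ k)] (hk : 2 ≤ k) (a b c d d' : ℤ)
    (hnd : NondegModP p a b c d) (hd : d = (p : ℤ) ^ r * d') :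
    ∑ α : ZMod (p ^ k), ∑ β : ZMod (p ^ k), ∑ γ : ZMod (p ^ k), ∑ δ : ZMod (p ^ k),
        (if α * γ = (p : ZMod (p ^ k)) ^ r * β ^ 2 ∧
            α * δ = (p : ZMod (p ^ k)) ^ r * β * γ ∧ γ ^ 2 = β * δ then
          Complex.exp (2 * Real.pi * Complex.I *
            ((((a : ZMod (p ^ k)) * δ - (b : ZMod (p ^ k)) * γ + (c : ZMod (p ^ k)) * β
                - (d' : ZMod (p ^ k)) * α).val : ℂ) / ((p : ℂ) ^ k)))
        else 0)
      = 0 := by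
  set π := ZMod.castHom (dvd_pow_self p (by omega : k ≠ 0)) (ZMod p)
  have hT : IsTransverseToCone (π ((p : ZMod (p ^ k)) ^ r)) (π a) (π b) (π c) (π d') := by
    simpa only [π, map_pow, map_natCast, map_intCast] using
      isTransverseToCone_of_nondegModP (by omega) hnd hd
  calc _ = ∑ x, coneTerm ZMod.stdAddChar ((p : ZMod (p ^ k)) ^ r) a b c d' x := by
        simp only [Fintype.sum_prod_type, coneTerm, coneForm_eq_zero_iff, cubicPairing,
          ZMod.stdAddChar_apply_eq_exp, Nat.cast_pow]
    _ = 0 := Fintype.sum_eq_zero_of_sum_add_eq_zero _ ((p : ZMod (p ^ k)) ^ (k - 1) • ·)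
          (sum_coneTerm_add_pow_smul_eq_zero hk π hT)
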